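/- Fix ρ ∈ (0,1], r > 0, α ∈ (0,1) and c ∈ (0,1). Let Z_0, Z_1, Z_2, … be i.i.d. standard normal random variables and set p_i = Φ(−√ρ·Z_0 − √(1−ρ)·Z_i) for i ≥ 1. Then the limit L := lim_{m→∞} Pr( ((1/m) Σ_{i=1}^m p_i^r)^{1/r} ≤ c ) exists, and L ≤ α if and only if c^r ≤ g_{ρ,r}(−Φ^{−1}(α)). In particular, the largest threshold c for which the asymptotic type-I error of the generalized-mean test is at most α under equicorrelation ρ is ( g_{ρ,r}(−Φ^{−1}(α)) )^{1/r}. -/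

import Mathlib

open MeasureTheory ProbabilityTheory Filter

/-- Standard normal CDF `Φ`. -/
noncomputable def Phi (x : ℝ) : ℝ := ((gaussianReal 0 1 : Measure ℝ) (Set.Iic x)).toReal

/-- Standard normal quantile function `Φ⁻¹` (a two-sided inverse of `Φ` on `(0,1)`). -/
noncomputable def PhiInv (y : ℝ) : ℝ := Function.invFun Phi y

/-- `g_{ρ,r}(z) = E[p₁^r | Z₀ = z] = ∫ Φ(-√ρ z - √(1-ρ) x)^r φ(x) dx`. -/
noncomputable def gFun (ρ r z : ℝ) : ℝ :=
  ∫ x : ℝ, Phi (-(Real.sqrt ρ * z) - Real.sqrt (1 - ρ) * x) ^ r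
    ∂(gaussianReal 0 1 : Measure ℝ)

/-! Conditionally on `Z₀ = z` the `p_i ^ r` are i.i.d. with mean `g_{ρ,r}(z)`. Applying the
strong law for each fixed `z` and integrating over `z`, which is legitimate since `Z₀` is
independent of `(Z_i)_{i ≥ 1}`, the mean of the `p_i ^ r` tends almost surely to `g_{ρ,r}(Z₀)`.
Since `g_{ρ,r}` is a continuous strictly decreasing bijection onto `(0,1)`, there is a `z*` with
`g_{ρ,r}(z*) = c ^ r`, and off the null event `{Z₀ = z*}` the event `{mean ≤ c ^ r}` is eventually
`{Z₀ > z*}`. Hence `L = Pr(Z₀ > z*) = Φ(-z*)`, and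
`Φ(-z*) ≤ α ↔ -Φ⁻¹(α) ≤ z* ↔ c ^ r ≤ g_{ρ,r}(-Φ⁻¹(α))`. -/

open Set Topology

lemma ProbabilityTheory.continuous_cdf (μ : Measure ℝ) [IsProbabilityMeasure μ]
    [NullSingletonClass μ] : Continuous (cdf μ) := by
  refine continuous_iff_continuousAt.2 fun x => ?_
  rw [(monotone_cdf μ).continuousAt_iff_leftLim_eq_rightLim, StieltjesFunction.rightLim_eq]
  have hatom : ENNReal.ofReal (cdf μ x - Function.leftLim (cdf μ) x) = 0 := by
    rw [← StieltjesFunction.measure_singleton, measure_cdf, measure_singleton]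
  have := (monotone_cdf μ).leftLim_le (le_refl x)
  linarith [ENNReal.ofReal_eq_zero.1 hatom]

lemma ProbabilityTheory.strictMono_cdf {μ : Measure ℝ} [IsProbabilityMeasure μ]
    (hμ : volume ≪ μ) : StrictMono (cdf μ) := by
  intro x y hxy
  have hIoc : ENNReal.ofReal (cdf μ y - cdf μ x) ≠ 0 := by
    rw [← StieltjesFunction.measure_Ioc, measure_cdf]
    exact fun h => (not_le.2 hxy) (by simpa using hμ h)
  linarith [ENNReal.ofReal_pos.1 (pos_iff_ne_zero.2 hIoc)]

lemma exists_eq_of_tendsto_of_tendsto {f : ℝ → ℝ} (hf : Continuous f) {l₁ l₂ : Filter ℝ}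
    [l₁.NeBot] [l₂.NeBot] {a b y : ℝ} (h₁ : Tendsto f l₁ (𝓝 a)) (h₂ : Tendsto f l₂ (𝓝 b))
    (hy : y ∈ Ioo a b) : ∃ x, f x = y := by
  obtain ⟨x₁, hx₁⟩ := (h₁.eventually_lt_const hy.1).exists
  obtain ⟨x₂, hx₂⟩ := (h₂.eventually_const_lt hy.2).exists
  exact intermediate_value_univ x₁ x₂ hf ⟨hx₁.le, hx₂.le⟩

instance : NullSingletonClass (gaussianReal 0 1) := nullSingletonClass_gaussianReal one_ne_zero

lemma Phi_eq_cdf : Phi = cdf (gaussianReal 0 1) := by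
  ext x
  rw [cdf_eq_real, measureReal_def, Phi]

@[fun_prop]
lemma continuous_Phi : Continuous Phi := Phi_eq_cdf ▸ continuous_cdf _

lemma strictMono_Phi : StrictMono Phi :=
  Phi_eq_cdf ▸ strictMono_cdf (gaussianReal_absolutelyContinuous' 0 one_ne_zero)

lemma Phi_pos (x : ℝ) : 0 < Phi x :=
  (Phi_eq_cdf ▸ cdf_nonneg _ (x - 1)).trans_lt (strictMono_Phi (sub_one_lt x))

lemma Phi_lt_one (x : ℝ) : Phi x < 1 :=
  (strictMono_Phi (lt_add_one x)).trans_le (Phi_eq_cdf ▸ cdf_le_one _ (x + 1))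

lemma Phi_PhiInv {y : ℝ} (hy : y ∈ Ioo 0 1) : Phi (PhiInv y) = y :=
  Function.invFun_eq <| Phi_eq_cdf ▸ exists_eq_of_tendsto_of_tendsto (continuous_cdf _)
    (tendsto_cdf_atBot _) (tendsto_cdf_atTop _) hy

lemma gaussianReal_Ioi_eq_ofReal_Phi (x : ℝ) :
    gaussianReal 0 1 (Ioi x) = ENNReal.ofReal (Phi (-x)) := by
  have hsymm : (gaussianReal 0 1).map (fun x => -x) = gaussianReal 0 1 := by
    simpa using gaussianReal_map_neg (μ := 0) (v := 1)
  rw [Phi_eq_cdf, ofReal_cdf, ← measure_congr Iio_ae_eq_Iic, ← hsymm,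
    Measure.map_apply measurable_neg measurableSet_Iio]
  congr 1
  ext y
  simp

lemma integral_lt_integral_of_forall_lt {α : Type*} [MeasurableSpace α] {μ : Measure α} [NeZero μ]
    {f g : α → ℝ} (hf : Integrable f μ) (hg : Integrable g μ) (h : ∀ x, f x < g x) :
    ∫ x, f x ∂μ < ∫ x, g x ∂μ := by
  have hsupp : Function.support (fun x => g x - f x) = univ :=
    eq_univ_of_forall fun x => (sub_pos.2 (h x)).ne'
  rw [← sub_pos, ← integral_sub hg hf,
    integral_pos_iff_support_of_nonneg (fun x => (sub_pos.2 (h x)).le) (hg.sub hf), hsupp]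
  exact (NeZero.ne (μ univ)).bot_lt

noncomputable def pValuePow (ρ r z x : ℝ) : ℝ :=
  Phi (-(Real.sqrt ρ * z) - Real.sqrt (1 - ρ) * x) ^ r

section pValuePow

variable {ρ r : ℝ}

lemma continuous_pValuePow : Continuous (Function.uncurry (pValuePow ρ r)) :=
  (continuous_Phi.comp (by fun_prop)).rpow_const fun _ => Or.inl (Phi_pos _).ne'

lemma pValuePow_nonneg (z x : ℝ) : 0 ≤ pValuePow ρ r z x :=
  Real.rpow_nonneg (Phi_pos _).le r

lemma norm_pValuePow_le_one (hr : 0 ≤ r) (z x : ℝ) : ‖pValuePow ρ r z x‖ ≤ 1 := by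
  rw [Real.norm_of_nonneg (pValuePow_nonneg z x)]
  exact Real.rpow_le_one (Phi_pos _).le (Phi_lt_one _).le hr

lemma integrable_pValuePow (hr : 0 ≤ r) (z : ℝ) :
    Integrable (pValuePow ρ r z) (gaussianReal 0 1) :=
  .of_bound (continuous_pValuePow.comp (Continuous.prodMk_right z)).aestronglyMeasurable 1 <|
    ae_of_all _ (norm_pValuePow_le_one hr z)

lemma gFun_eq_integral (z : ℝ) : gFun ρ r z = ∫ x, pValuePow ρ r z x ∂gaussianReal 0 1 := rfl

lemma continuous_gFun (hr : 0 ≤ r) : Continuous (gFun ρ r) := by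
  simp only [funext gFun_eq_integral]
  exact continuous_of_dominated (fun z => (integrable_pValuePow hr z).aestronglyMeasurable)
    (fun z => ae_of_all _ (norm_pValuePow_le_one hr z)) (integrable_const 1)
    (ae_of_all _ fun x => continuous_pValuePow.comp (Continuous.prodMk_left x))

lemma strictAnti_gFun (hρ : 0 < ρ) (hr : 0 < r) : StrictAnti (gFun ρ r) := by
  intro z₁ z₂ hz
  refine integral_lt_integral_of_forall_lt (integrable_pValuePow hr.le z₂)
    (integrable_pValuePow hr.le z₁) fun x => ?_
  refine Real.rpow_lt_rpow (Phi_pos _).le (strictMono_Phi ?_) hr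
  have := mul_lt_mul_of_pos_left hz (Real.sqrt_pos.2 hρ)
  linarith

lemma tendsto_gFun {l : Filter ℝ} [l.IsCountablyGenerated] (hr : 0 < r) {a : ℝ}
    (h : ∀ x, Tendsto (fun z => Phi (-(Real.sqrt ρ * z) - Real.sqrt (1 - ρ) * x)) l (𝓝 a)) :
    Tendsto (gFun ρ r) l (𝓝 (a ^ r)) := by
  have hconst : a ^ r = ∫ _ : ℝ, a ^ r ∂gaussianReal 0 1 := by simp
  rw [hconst]
  refine tendsto_integral_filter_of_dominated_convergence (fun _ => 1)
    (Eventually.of_forall fun z => (integrable_pValuePow hr.le z).aestronglyMeasurable)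
    (Eventually.of_forall fun z => ae_of_all _ (norm_pValuePow_le_one hr.le z))
    (integrable_const 1)
    (ae_of_all _ fun x => ((Real.continuousAt_rpow_const a r (Or.inr hr.le)).tendsto.comp (h x)))

lemma exists_gFun_eq (hρ : 0 < ρ) (hr : 0 < r) {y : ℝ} (hy : y ∈ Ioo 0 1) :
    ∃ z, gFun ρ r z = y := by
  have hslope := Real.sqrt_pos.2 hρ
  have hbot : Tendsto (gFun ρ r) atTop (𝓝 0) := by
    simpa [Real.zero_rpow hr.ne'] using tendsto_gFun (l := atTop) hr (a := 0) fun x =>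
      Phi_eq_cdf ▸ (tendsto_cdf_atBot _).comp <| by
        simpa [neg_mul, sub_eq_add_neg] using tendsto_atBot_add_const_right _ _
          (tendsto_id.const_mul_atTop_of_neg (neg_neg_of_pos hslope))
  have htop : Tendsto (gFun ρ r) atBot (𝓝 1) := by
    simpa using tendsto_gFun (l := atBot) hr (a := 1) fun x =>
      Phi_eq_cdf ▸ (tendsto_cdf_atTop _).comp <| by
        simpa [neg_mul, sub_eq_add_neg] using tendsto_atTop_add_const_right _ _
          (tendsto_id.const_mul_atBot_of_neg (neg_neg_of_pos hslope))
  exact exists_eq_of_tendsto_of_tendsto (continuous_gFun hr.le) hbot htop hy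

end pValuePow

section Independence

variable {Ω α β : Type*} [MeasurableSpace Ω] [MeasurableSpace α] [MeasurableSpace β]
  {μ : Measure Ω}

lemma ProbabilityTheory.iIndepFun.indepFun_head_tail {Z : ℕ → Ω → β} (h : iIndepFun Z μ)
    (hZ : ∀ i, Measurable (Z i)) : IndepFun (Z 0) (fun ω n => Z (n + 1) ω) μ := by
  let M : MeasurableSpace Ω := ⨆ i ∈ ({0}ᶜ : Set ℕ), MeasurableSpace.comap (Z i) inferInstance
  have htail : Measurable[M] (fun ω n => Z (n + 1) ω) :=
    measurable_pi_lambda _ fun n => (comap_measurable (Z (n + 1))).mono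
      (le_biSup (fun i => MeasurableSpace.comap (Z i) inferInstance) n.succ_ne_zero) le_rfl
  refine indep_of_indep_of_le_right (indep_of_indep_of_le_left
    (indep_iSup_of_disjoint (fun i => (hZ i).comap_le) h.iIndep (S := {0}) disjoint_compl_right)
    (le_biSup (fun i => MeasurableSpace.comap (Z i) inferInstance) rfl)) htail.comap_le

lemma ProbabilityTheory.IndepFun.ae_mem_of_forall_ae [IsFiniteMeasure μ] {X : Ω → α} {Y : Ω → β}
    (hXY : IndepFun X Y μ) (hX : Measurable X) (hY : Measurable Y) {s : Set (α × β)}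
    (hs : MeasurableSet s) (h : ∀ x, ∀ᵐ ω ∂μ, (x, Y ω) ∈ s) : ∀ᵐ ω ∂μ, (X ω, Y ω) ∈ s := by
  refine (ae_map_iff (p := (· ∈ s)) (hX.prodMk hY).aemeasurable hs).1 ?_
  rw [(indepFun_iff_map_prod_eq_prod_map_map hX.aemeasurable hY.aemeasurable).1 hXY,
    Measure.ae_prod_mem_iff_ae_ae_mem hs]
  exact ae_of_all _ fun x => (ae_map_iff hY.aemeasurable (measurable_prodMk_left hs)).2 (h x)

end Independence

section StrongLaw

variable {Ω α β : Type*} [MeasurableSpace Ω] [MeasurableSpace α] [MeasurableSpace β]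
  {μ : Measure Ω} {ν : Measure β} {Y : ℕ → Ω → β}

lemma ae_tendsto_average_comp (hY : ∀ n, Measurable (Y n)) (hYY : iIndepFun Y μ)
    (hlaw : ∀ n, μ.map (Y n) = ν) {f : β → ℝ} (hf : Measurable f) (hfν : Integrable f ν) :
    ∀ᵐ ω ∂μ, Tendsto (fun m : ℕ => (∑ n ∈ Finset.range m, f (Y n ω)) / m) atTop
      (𝓝 (∫ y, f y ∂ν)) := by
  have hmean : μ[f ∘ Y 0] = ∫ y, f y ∂ν := by
    rw [← hlaw 0, integral_map (hY 0).aemeasurable hf.aestronglyMeasurable]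
    rfl
  rw [← hmean]
  refine strong_law_ae_real (fun n => f ∘ Y n) ((hlaw 0 ▸ hfν).comp_measurable (hY 0))
    (fun i j hij => (hYY.indepFun hij).comp hf hf) fun i => ?_
  exact IdentDistrib.comp ⟨(hY i).aemeasurable, (hY 0).aemeasurable, by rw [hlaw, hlaw]⟩ hf

lemma ae_tendsto_average_of_indepFun [IsFiniteMeasure μ] [SFinite ν] {X : Ω → α}
    (hX : Measurable X) (hY : ∀ n, Measurable (Y n)) (hXY : IndepFun X (fun ω n => Y n ω) μ)
    (hYY : iIndepFun Y μ) (hlaw : ∀ n, μ.map (Y n) = ν) {F : α → β → ℝ}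
    (hF : StronglyMeasurable (Function.uncurry F)) (hFν : ∀ x, Integrable (F x) ν) :
    ∀ᵐ ω ∂μ, Tendsto (fun m : ℕ => (∑ n ∈ Finset.range m, F (X ω) (Y n ω)) / m) atTop
      (𝓝 (∫ y, F (X ω) y ∂ν)) := by
  let s : Set (α × (ℕ → β)) := {p | Tendsto
    (fun m : ℕ => (∑ n ∈ Finset.range m, F p.1 (p.2 n)) / m - ∫ y, F p.1 y ∂ν) atTop (𝓝 0)}
  have hs : MeasurableSet s := by
    refine measurableSet_tendsto _ fun m => Measurable.sub ?_ ?_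
    · exact (Finset.measurable_sum _ fun n _ => hF.measurable.comp
        (measurable_fst.prodMk ((measurable_pi_apply n).comp measurable_snd))).div_const _
    · exact (hF.integral_prod_right' (ν := ν)).measurable.comp measurable_fst
  have hsection : ∀ x, ∀ᵐ ω ∂μ, (x, fun n => Y n ω) ∈ s := fun x => by
    filter_upwards [ae_tendsto_average_comp hY hYY hlaw
      (hF.measurable.comp measurable_prodMk_left) (hFν x)] with ω hω
    exact tendsto_sub_nhds_zero_iff.2 hω
  filter_upwards [hXY.ae_mem_of_forall_ae hX (measurable_pi_lambda _ hY) hs hsection] with ω hω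
  exact tendsto_sub_nhds_zero_iff.1 hω

end StrongLaw

lemma Filter.Tendsto.eventually_le_iff_lt {ι : Type*} {l : Filter ι} {u : ι → ℝ} {a t : ℝ}
    (hu : Tendsto u l (𝓝 a)) (ht : a ≠ t) : ∀ᶠ n in l, (u n ≤ t ↔ a < t) := by
  rcases ht.lt_or_gt with h | h
  · filter_upwards [hu.eventually_lt_const h] with n hn using iff_of_true hn.le h
  · filter_upwards [hu.eventually_const_lt h] with n hn using iff_of_false hn.not_ge h.not_gt

lemma one_div_mul_sum_Icc_one (f : ℕ → ℝ) (m : ℕ) :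
    (1 / m : ℝ) * ∑ i ∈ Finset.Icc 1 m, f i = (∑ n ∈ Finset.range m, f (n + 1)) / m := by
  rw [one_div_mul_eq_div, ← Finset.Ico_add_one_right_eq_Icc, Finset.sum_Ico_eq_sum_range]
  simp [add_comm]

/-- in the equicorrelated Gaussian null model with `ρ ∈ (0,1]`, `r > 0`,
the limit `L = lim_m Pr(((1/m)Σ p_i^r)^{1/r} ≤ c)` exists and `L ≤ α` iff
`c^r ≤ g_{ρ,r}(-Φ⁻¹(α))`. -/
theorem stmt_13 {Ω : Type*} [MeasurableSpace Ω] (μ : Measure Ω) [IsProbabilityMeasure μ]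
    (ρ r c α : ℝ) (hρ : ρ ∈ Set.Ioc (0:ℝ) 1) (hr : 0 < r)
    (hα : α ∈ Set.Ioo (0:ℝ) 1) (hc : c ∈ Set.Ioo (0:ℝ) 1)
    (Z : ℕ → Ω → ℝ) (hmeas : ∀ i, Measurable (Z i))
    (hindep : iIndepFun Z μ)
    (hlaw : ∀ i, μ.map (Z i) = (gaussianReal 0 1 : Measure ℝ)) :
    ∃ L : ENNReal,
      Tendsto (fun m : ℕ =>
          μ {ω | ((1 / m : ℝ) * ∑ i ∈ Finset.Icc 1 m,
              Phi (-(Real.sqrt ρ * Z 0 ω) - Real.sqrt (1 - ρ) * Z i ω) ^ r) ^ (1 / r) ≤ c})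
        atTop (nhds L) ∧
      (L ≤ ENNReal.ofReal α ↔ c ^ r ≤ gFun ρ r (-(PhiInv α))) := by
  have hg := strictAnti_gFun hρ.1 hr
  obtain ⟨z, hz⟩ := exists_gFun_eq hρ.1 hr
    ⟨Real.rpow_pos_of_pos hc.1 r, Real.rpow_lt_one hc.1.le hc.2 hr⟩
  have hslln := ae_tendsto_average_of_indepFun (hmeas 0) (fun n => hmeas (n + 1))
    (hindep.indepFun_head_tail hmeas) (hindep.precomp Nat.succ_injective) (fun n => hlaw (n + 1))
    continuous_pValuePow.stronglyMeasurable (integrable_pValuePow (ρ := ρ) hr.le)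
  have hnot_atom : ∀ᵐ ω ∂μ, Z 0 ω ≠ z :=
    (ae_map_iff (hmeas 0).aemeasurable (measurableSet_singleton z).compl).1
      (hlaw 0 ▸ measure_eq_zero_iff_ae_notMem.1 (measure_singleton z))
  refine ⟨μ (Z 0 ⁻¹' Ioi z), tendsto_measure_of_ae_tendsto_indicator_of_isFiniteMeasure _
    ((hmeas 0) measurableSet_Ioi) (fun m => measurableSet_le (by fun_prop) measurable_const) ?_, ?_⟩
  · filter_upwards [hslln, hnot_atom] with ω hω hne
    filter_upwards [hω.eventually_le_iff_lt (hz ▸ (hg.injective.ne hne))] with m hm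
    rw [one_div_mul_sum_Icc_one, one_div, Real.rpow_inv_le_iff_of_pos ?_ hc.1.le hr]
    · exact hm.trans (by rw [← hz]; exact hg.lt_iff_gt)
    · exact div_nonneg (Finset.sum_nonneg fun n _ => pValuePow_nonneg _ _) m.cast_nonneg
  · rw [← Measure.map_apply (hmeas 0) measurableSet_Ioi, hlaw 0, gaussianReal_Ioi_eq_ofReal_Phi,
      ENNReal.ofReal_le_ofReal_iff hα.1.le, ← hz, hg.le_iff_ge, neg_le,
      ← strictMono_Phi.le_iff_le (b := PhiInv α), Phi_PhiInv hα]
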